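/- Let s, δ ∈ ℕ with s = 3δ − 2, G = (V, E) with V := { v ∈ △_{2,s}^ℤ : max_i v_i ≤ s−δ } ∪ { v ∈ △_{2,s+1}^ℤ : 1 ≤ v_i ≤ s−δ+1 ∀i }, E the unit-L¹-distance edges. Let γ ≥ 0 and b(v) = +γ on △_{2,s}^ℤ ∩ V and b(v) = −γ on △_{2,s+1}^ℤ ∩ V. Then there exists a bidirected balance-flow f : E↔ → ℝ≥0 with respect to b such that f(v,w) + f(w,v) ≤ γ for every edge {v,w} ∈ E. -/
import Mathlib

/-- The (finite) vertex set of the simplified level-2 gadget, as a `Finset`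
(all coordinates of its members are at most `s + 1`). -/
def gadgetV (s δ : ℕ) : Finset (Fin 3 → ℕ) :=
  (Fintype.piFinset fun _ : Fin 3 => Finset.range (s + 2)).filter
    (fun v => (∑ i, v i = s ∧ ∀ i, v i ≤ s - δ) ∨
              (∑ i, v i = s + 1 ∧ ∀ i, 1 ≤ v i ∧ v i ≤ s - δ + 1))

/-- Edges of the gadget graph: unit `L¹`-distance pairs of vertices. -/
def gadgetEdge (s δ : ℕ) (v w : Fin 3 → ℕ) : Prop :=
  v ∈ gadgetV s δ ∧ w ∈ gadgetV s δ ∧ ∑ i, ((v i : ℤ) - w i).natAbs = 1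

/- ### An explicit perfect matching between the two levels.

To a vertex `v` of the lower level (`∑ v = s`, all coordinates `≤ s - δ`)
we associate the upper-level vertex obtained by incrementing one coordinate:
the first coordinate attaining the minimum if `min v + max v ≤ s - δ`, and
the first coordinate attaining the maximum otherwise.  The predicate
`pickᵢ t v` says that coordinate `i` is selected (with threshold `t`),
written out as a purely linear-arithmetic condition. -/

abbrev pick0 (t : ℕ) (v : Fin 3 → ℕ) : Prop :=
  (v 0 ≤ v 1 ∧ v 0 ≤ v 2 ∧ v 0 + v 1 ≤ t ∧ v 0 + v 2 ≤ t) ∨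
  (v 1 ≤ v 0 ∧ v 2 ≤ v 0 ∧ t < v 0 + v 1 ∧ t < v 0 + v 2)

abbrev pick1 (t : ℕ) (v : Fin 3 → ℕ) : Prop :=
  (v 1 < v 0 ∧ v 1 ≤ v 2 ∧ v 1 + v 0 ≤ t ∧ v 1 + v 2 ≤ t) ∨
  (v 0 < v 1 ∧ v 2 ≤ v 1 ∧ t < v 1 + v 0 ∧ t < v 1 + v 2)

abbrev pick2 (t : ℕ) (v : Fin 3 → ℕ) : Prop :=
  (v 2 < v 0 ∧ v 2 < v 1 ∧ v 2 + v 0 ≤ t ∧ v 2 + v 1 ≤ t) ∨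
  (v 0 < v 2 ∧ v 1 < v 2 ∧ t < v 2 + v 0 ∧ t < v 2 + v 1)

/-- The matching (threshold `m`): increment the selected coordinate. -/
def mtch (m : ℕ) (v : Fin 3 → ℕ) : Fin 3 → ℕ :=
  if pick0 m v then ![v 0 + 1, v 1, v 2]
  else if pick1 m v then ![v 0, v 1 + 1, v 2]
  else ![v 0, v 1, v 2 + 1]

/-- The inverse matching (threshold `m + 1`): decrement the selected coordinate. -/
def invm (m : ℕ) (u : Fin 3 → ℕ) : Fin 3 → ℕ :=
  if pick0 (m + 1) u then ![u 0 - 1, u 1, u 2]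
  else if pick1 (m + 1) u then ![u 0, u 1 - 1, u 2]
  else ![u 0, u 1, u 2 - 1]

/-- Membership in the lower level, written coordinatewise. -/
def isLow (s δ : ℕ) (v : Fin 3 → ℕ) : Prop :=
  v 0 + v 1 + v 2 = s ∧ v 0 ≤ s - δ ∧ v 1 ≤ s - δ ∧ v 2 ≤ s - δ

/-- Membership in the upper level, written coordinatewise. -/
def isUp (s δ : ℕ) (v : Fin 3 → ℕ) : Prop :=
  v 0 + v 1 + v 2 = s + 1 ∧ (1 ≤ v 0 ∧ v 0 ≤ s - δ + 1) ∧
    (1 ≤ v 1 ∧ v 1 ≤ s - δ + 1) ∧ (1 ≤ v 2 ∧ v 2 ≤ s - δ + 1)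

lemma pick2_of_not {t : ℕ} {v : Fin 3 → ℕ} (h0 : ¬ pick0 t v) (h1 : ¬ pick1 t v) :
    pick2 t v := by
  unfold pick0 pick1 pick2 at *
  omega

lemma mtch_cases (m : ℕ) (v : Fin 3 → ℕ) :
    (pick0 m v ∧ mtch m v = ![v 0 + 1, v 1, v 2]) ∨
    (pick1 m v ∧ mtch m v = ![v 0, v 1 + 1, v 2]) ∨
    (pick2 m v ∧ mtch m v = ![v 0, v 1, v 2 + 1]) := by
  unfold mtch
  split_ifs with h1 h2
  · exact Or.inl ⟨h1, rfl⟩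
  · exact Or.inr (Or.inl ⟨h2, rfl⟩)
  · exact Or.inr (Or.inr ⟨pick2_of_not h1 h2, rfl⟩)

lemma invm_cases (m : ℕ) (u : Fin 3 → ℕ) :
    (pick0 (m + 1) u ∧ invm m u = ![u 0 - 1, u 1, u 2]) ∨
    (pick1 (m + 1) u ∧ invm m u = ![u 0, u 1 - 1, u 2]) ∨
    (pick2 (m + 1) u ∧ invm m u = ![u 0, u 1, u 2 - 1]) := by
  unfold invm
  split_ifs with h1 h2
  · exact Or.inl ⟨h1, rfl⟩
  · exact Or.inr (Or.inl ⟨h2, rfl⟩)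
  · exact Or.inr (Or.inr ⟨pick2_of_not h1 h2, rfl⟩)

lemma vec_ext {v w : Fin 3 → ℕ} (h0 : v 0 = w 0) (h1 : v 1 = w 1) (h2 : v 2 = w 2) :
    v = w := by
  funext j
  fin_cases j <;> assumption

/-- `mtch` maps the lower level into the upper level. -/
lemma mtch_isUp {s δ : ℕ} (hs : s + 2 = 3 * δ) {v : Fin 3 → ℕ} (hv : isLow s δ v) :
    isUp s δ (mtch (s - δ) v) := by
  obtain ⟨h1, h2, h3, h4⟩ := hv
  rcases mtch_cases (s - δ) v with ⟨hc, hq⟩ | ⟨hc, hq⟩ | ⟨hc, hq⟩ <;>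
    rw [isUp, hq] <;>
    simp only [Matrix.cons_val_zero, Matrix.cons_val_one, Matrix.head_cons,
      Matrix.cons_val_two, Matrix.tail_cons] <;>
    omega

/-- `mtch v` is at `L¹`-distance one from `v`. -/
lemma mtch_dist {s δ : ℕ} (hs : s + 2 = 3 * δ) {v : Fin 3 → ℕ} (hv : isLow s δ v) :
    ∑ i, ((v i : ℤ) - mtch (s - δ) v i).natAbs = 1 := by
  rw [Fin.sum_univ_three]
  rcases mtch_cases (s - δ) v with ⟨hc, hq⟩ | ⟨hc, hq⟩ | ⟨hc, hq⟩ <;>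
    rw [hq] <;>
    simp only [Matrix.cons_val_zero, Matrix.cons_val_one, Matrix.head_cons,
      Matrix.cons_val_two, Matrix.tail_cons] <;>
    push_cast <;>
    omega

/-- `invm` maps the upper level into the lower level. -/
lemma invm_isLow {s δ : ℕ} (hs : s + 2 = 3 * δ) {u : Fin 3 → ℕ} (hu : isUp s δ u) :
    isLow s δ (invm (s - δ) u) := by
  obtain ⟨h1, h2, h3, h4⟩ := hu
  rcases invm_cases (s - δ) u with ⟨hd, hq⟩ | ⟨hd, hq⟩ | ⟨hd, hq⟩ <;>
    rw [isLow, hq] <;>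
    simp only [Matrix.cons_val_zero, Matrix.cons_val_one, Matrix.head_cons,
      Matrix.cons_val_two, Matrix.tail_cons] <;>
    omega

/-- `invm` is a left inverse of `mtch` on the lower level. -/
lemma invm_mtch {s δ : ℕ} (hs : s + 2 = 3 * δ) {v : Fin 3 → ℕ} (hv : isLow s δ v) :
    invm (s - δ) (mtch (s - δ) v) = v := by
  obtain ⟨h1, h2, h3, h4⟩ := hv
  rcases mtch_cases (s - δ) v with ⟨hc, hq⟩ | ⟨hc, hq⟩ | ⟨hc, hq⟩ <;> rw [hq]
  · rcases invm_cases (s - δ) ![v 0 + 1, v 1, v 2] with ⟨hd, hq2⟩ | ⟨hd, hq2⟩ | ⟨hd, hq2⟩ <;>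
      rw [hq2] <;>
      simp only [pick0, pick1, pick2, Matrix.cons_val_zero, Matrix.cons_val_one,
        Matrix.head_cons, Matrix.cons_val_two, Matrix.tail_cons] at hc hd <;>
      apply vec_ext <;>
      simp only [Matrix.cons_val_zero, Matrix.cons_val_one, Matrix.head_cons,
        Matrix.cons_val_two, Matrix.tail_cons] <;>
      omega
  · rcases invm_cases (s - δ) ![v 0, v 1 + 1, v 2] with ⟨hd, hq2⟩ | ⟨hd, hq2⟩ | ⟨hd, hq2⟩ <;>
      rw [hq2] <;>
      simp only [pick0, pick1, pick2, Matrix.cons_val_zero, Matrix.cons_val_one,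
        Matrix.head_cons, Matrix.cons_val_two, Matrix.tail_cons] at hc hd <;>
      apply vec_ext <;>
      simp only [Matrix.cons_val_zero, Matrix.cons_val_one, Matrix.head_cons,
        Matrix.cons_val_two, Matrix.tail_cons] <;>
      omega
  · rcases invm_cases (s - δ) ![v 0, v 1, v 2 + 1] with ⟨hd, hq2⟩ | ⟨hd, hq2⟩ | ⟨hd, hq2⟩ <;>
      rw [hq2] <;>
      simp only [pick0, pick1, pick2, Matrix.cons_val_zero, Matrix.cons_val_one,
        Matrix.head_cons, Matrix.cons_val_two, Matrix.tail_cons] at hc hd <;>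
      apply vec_ext <;>
      simp only [Matrix.cons_val_zero, Matrix.cons_val_one, Matrix.head_cons,
        Matrix.cons_val_two, Matrix.tail_cons] <;>
      omega

/-- `mtch` is a left inverse of `invm` on the upper level. -/
lemma mtch_invm {s δ : ℕ} (hs : s + 2 = 3 * δ) {u : Fin 3 → ℕ} (hu : isUp s δ u) :
    mtch (s - δ) (invm (s - δ) u) = u := by
  obtain ⟨h1, h2, h3, h4⟩ := hu
  rcases invm_cases (s - δ) u with ⟨hd, hq⟩ | ⟨hd, hq⟩ | ⟨hd, hq⟩ <;> rw [hq]
  · rcases mtch_cases (s - δ) ![u 0 - 1, u 1, u 2] with ⟨hc, hq2⟩ | ⟨hc, hq2⟩ | ⟨hc, hq2⟩ <;>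
      rw [hq2] <;>
      simp only [pick0, pick1, pick2, Matrix.cons_val_zero, Matrix.cons_val_one,
        Matrix.head_cons, Matrix.cons_val_two, Matrix.tail_cons] at hc hd <;>
      apply vec_ext <;>
      simp only [Matrix.cons_val_zero, Matrix.cons_val_one, Matrix.head_cons,
        Matrix.cons_val_two, Matrix.tail_cons] <;>
      omega
  · rcases mtch_cases (s - δ) ![u 0, u 1 - 1, u 2] with ⟨hc, hq2⟩ | ⟨hc, hq2⟩ | ⟨hc, hq2⟩ <;>
      rw [hq2] <;>
      simp only [pick0, pick1, pick2, Matrix.cons_val_zero, Matrix.cons_val_one,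
        Matrix.head_cons, Matrix.cons_val_two, Matrix.tail_cons] at hc hd <;>
      apply vec_ext <;>
      simp only [Matrix.cons_val_zero, Matrix.cons_val_one, Matrix.head_cons,
        Matrix.cons_val_two, Matrix.tail_cons] <;>
      omega
  · rcases mtch_cases (s - δ) ![u 0, u 1, u 2 - 1] with ⟨hc, hq2⟩ | ⟨hc, hq2⟩ | ⟨hc, hq2⟩ <;>
      rw [hq2] <;>
      simp only [pick0, pick1, pick2, Matrix.cons_val_zero, Matrix.cons_val_one,
        Matrix.head_cons, Matrix.cons_val_two, Matrix.tail_cons] at hc hd <;>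
      apply vec_ext <;>
      simp only [Matrix.cons_val_zero, Matrix.cons_val_one, Matrix.head_cons,
        Matrix.cons_val_two, Matrix.tail_cons] <;>
      omega

lemma forall3 {P : Fin 3 → Prop} : (∀ i, P i) ↔ P 0 ∧ P 1 ∧ P 2 :=
  ⟨fun h => ⟨h 0, h 1, h 2⟩, fun ⟨h0, h1, h2⟩ i => by fin_cases i <;> assumption⟩

lemma mem_gadgetV {s δ : ℕ} {v : Fin 3 → ℕ} :
    v ∈ gadgetV s δ ↔ isLow s δ v ∨ isUp s δ v := by
  rw [gadgetV, isLow, isUp, Finset.mem_filter, Fintype.mem_piFinset]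
  simp only [Finset.mem_range, Fin.sum_univ_three, forall3]
  constructor
  · rintro ⟨-, h⟩; omega
  · intro h; omega

/-- Let `s = 3δ − 2`, `γ ≥ 0` and `b = +γ` on `△_{2,s}^ℤ ∩ V`, `b = −γ` on
`△_{2,s+1}^ℤ ∩ V`. Then there is a bidirected balance-flow `f : E↔ → ℝ≥0`
with respect to `b` such that `f(v,w) + f(w,v) ≤ γ` on every edge. -/
theorem gadget_flow (s δ : ℕ) (hs : s + 2 = 3 * δ) (γ : ℝ) (hγ : 0 ≤ γ) :
    ∃ f : (Fin 3 → ℕ) → (Fin 3 → ℕ) → ℝ,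
      (∀ v w, 0 ≤ f v w) ∧
      (∀ v w, ¬ gadgetEdge s δ v w → f v w = 0) ∧
      (∀ v ∈ gadgetV s δ,
        ∑ w ∈ gadgetV s δ, (f v w - f w v) = if ∑ i, v i = s then γ else -γ) ∧
      (∀ v w, gadgetEdge s δ v w → f v w + f w v ≤ γ) := by
  classical
  refine ⟨fun v w => if isLow s δ v ∧ w = mtch (s - δ) v then γ else 0, ?_, ?_, ?_, ?_⟩
  · intro v w
    dsimp only
    split_ifs <;> [exact hγ; exact le_rfl]
  · intro v w hne
    dsimp only
    rw [if_neg]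
    rintro ⟨hl, rfl⟩
    exact hne ⟨mem_gadgetV.mpr (Or.inl hl), mem_gadgetV.mpr (Or.inr (mtch_isUp hs hl)),
      mtch_dist hs hl⟩
  · intro v hv
    dsimp only
    rw [Finset.sum_sub_distrib]
    have hsum3 : (∑ i, v i) = v 0 + v 1 + v 2 := Fin.sum_univ_three v
    rcases mem_gadgetV.mp hv with hl | hu
    · have h1 : ∑ w ∈ gadgetV s δ,
          (if isLow s δ v ∧ w = mtch (s - δ) v then γ else (0:ℝ)) = γ := by
        rw [Finset.sum_eq_single_of_mem (mtch (s - δ) v)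
          (mem_gadgetV.mpr (Or.inr (mtch_isUp hs hl)))
          (fun w _ hne => if_neg (fun h => hne h.2))]
        exact if_pos ⟨hl, rfl⟩
      have h2 : ∑ w ∈ gadgetV s δ,
          (if isLow s δ w ∧ v = mtch (s - δ) w then γ else (0:ℝ)) = 0 := by
        refine Finset.sum_eq_zero fun w _ => if_neg ?_
        rintro ⟨hlw, rfl⟩
        have h5 := (mtch_isUp hs hlw).1
        have h6 := hlw.1
        have h7 := hl.1
        omega
      rw [h1, h2, sub_zero, if_pos (by rw [hsum3]; exact hl.1)]
    · have h1 : ∑ w ∈ gadgetV s δ,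
          (if isLow s δ v ∧ w = mtch (s - δ) v then γ else (0:ℝ)) = 0 := by
        refine Finset.sum_eq_zero fun w _ => if_neg ?_
        rintro ⟨hlv, -⟩
        have h6 := hlv.1
        have h7 := hu.1
        omega
      have h2 : ∑ w ∈ gadgetV s δ,
          (if isLow s δ w ∧ v = mtch (s - δ) w then γ else (0:ℝ)) = γ := by
        rw [Finset.sum_eq_single_of_mem (invm (s - δ) v)
          (mem_gadgetV.mpr (Or.inl (invm_isLow hs hu)))]
        · exact if_pos ⟨invm_isLow hs hu, (mtch_invm hs hu).symm⟩
        · intro w _ hne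
          refine if_neg ?_
          rintro ⟨hlw, rfl⟩
          exact hne (invm_mtch hs hlw).symm
      have h8 := hu.1
      rw [h1, h2, zero_sub, if_neg (by omega)]
  · intro v w hedge
    dsimp only
    by_cases h1 : isLow s δ v ∧ w = mtch (s - δ) v
    · have hw : ¬ (isLow s δ w ∧ v = mtch (s - δ) w) := by
        rintro ⟨hlw, -⟩
        have h5 := (mtch_isUp hs h1.1).1
        have h6 := hlw.1
        rw [← h1.2] at h5
        omega
      rw [if_pos h1, if_neg hw, add_zero]
    · rw [if_neg h1, zero_add]
      split_ifs <;> [exact le_rfl; exact hγ]
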